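/- arXiv:1605.09658 — 2 statements merged into one kernel-verified Lean document; each statement's English description precedes it below -/
import Mathlib

section
/- The gradient of s_μ(β) = max_{‖α‖₂ ≤ 1} (⟨α, Aβ⟩ − (μ/2)‖α‖₂²), namely ∇s_μ(β) = Aᵀ proj_K(Aβ/μ), is Lipschitz continuous with Lipschitz constant ‖A‖₂²/μ, where ‖A‖₂ is the spectral norm of A. -/
open scoped RealInnerProductSpace

noncomputable def projK {m : ℕ} (x : EuclideanSpace ℝ (Fin m)) : EuclideanSpace ℝ (Fin m) :=
  if ‖x‖ ≤ 1 then x else ‖x‖⁻¹ • x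

/-- The spectral norm of a matrix: the operator norm of the associated
Euclidean linear map. -/
noncomputable def matSpectralNorm {m p : ℕ} (A : Matrix (Fin m) (Fin p) ℝ) : ℝ :=
  ‖LinearMap.toContinuousLinearMap (Matrix.toEuclideanLin A)‖

/-!
The gradient is `Aᵀ ∘ proj_K ∘ μ⁻¹ A`. Projection onto a closed convex set is characterised by
the variational inequality `⟪x - P x, z - P x⟫ ≤ 0` for `z ∈ K`, and adding the two instances for
`x` and `y` gives `‖P x - P y‖² ≤ ⟪x - y, P x - P y⟫`, so `P` is nonexpansive. The two matrix
factors contribute `‖Aᵀ‖₂ = ‖A‖₂` and `‖A‖₂ / μ`.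
-/

section ProjectionOntoConvex

variable {E : Type*} [NormedAddCommGroup E] [InnerProductSpace ℝ E]

theorem norm_sub_le_of_inner_sub_nonpos {K : Set E} {P : E → E} (hPK : ∀ x, P x ∈ K)
    (hP : ∀ x, ∀ z ∈ K, ⟪x - P x, z - P x⟫ ≤ 0) (x y : E) :
    ‖P x - P y‖ ≤ ‖x - y‖ := by
  have hx := hP x (P y) (hPK y)
  have hy := hP y (P x) (hPK x)
  have hsq : ‖P x - P y‖ ^ 2 ≤ ‖x - y‖ * ‖P x - P y‖ := calc
    ‖P x - P y‖ ^ 2 ≤ ⟪x - y, P x - P y⟫ := by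
      rw [← real_inner_self_eq_norm_sq]
      have hsum : ⟪x - y, P x - P y⟫ - ⟪P x - P y, P x - P y⟫ =
          -⟪x - P x, P y - P x⟫ - ⟪y - P y, P x - P y⟫ := by
        simp only [inner_sub_left, inner_sub_right, real_inner_comm]
        ring
      linarith
    _ ≤ ‖x - y‖ * ‖P x - P y‖ := real_inner_le_norm _ _
  nlinarith [norm_nonneg (P x - P y), norm_nonneg (x - y)]

end ProjectionOntoConvex

section UnitBallProjection

variable {m : ℕ}

theorem norm_projK_le_one (x : EuclideanSpace ℝ (Fin m)) : ‖projK x‖ ≤ 1 := by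
  unfold projK
  split_ifs with hx
  · exact hx
  · rw [norm_smul, norm_inv, norm_norm, inv_mul_cancel₀ (by linarith [norm_nonneg x])]

theorem inner_sub_projK_nonpos (x : EuclideanSpace ℝ (Fin m)) {z : EuclideanSpace ℝ (Fin m)}
    (hz : ‖z‖ ≤ 1) : ⟪x - projK x, z - projK x⟫ ≤ 0 := by
  unfold projK
  split_ifs with hx
  · simp
  · have hx0 : 0 < ‖x‖ := by linarith
    have hxz : ⟪x, z⟫ ≤ ‖x‖ := (real_inner_le_norm x z).trans (mul_le_of_le_one_right hx0.le hz)
    have hsq : ⟪x, x⟫ = ‖x‖ * ‖x‖ := real_inner_self_eq_norm_mul_norm x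
    have hcoef : 0 ≤ 1 - ‖x‖⁻¹ := sub_nonneg.2 (inv_le_one_of_one_le₀ (by linarith))
    calc ⟪x - ‖x‖⁻¹ • x, z - ‖x‖⁻¹ • x⟫ = (1 - ‖x‖⁻¹) * (⟪x, z⟫ - ‖x‖) := by
          simp only [inner_sub_left, inner_sub_right, inner_smul_left, inner_smul_right,
            RCLike.conj_to_real, hsq]
          field_simp
      _ ≤ 0 := mul_nonpos_of_nonneg_of_nonpos hcoef (by linarith)

theorem norm_projK_sub_projK_le (x y : EuclideanSpace ℝ (Fin m)) :
    ‖projK x - projK y‖ ≤ ‖x - y‖ :=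
  norm_sub_le_of_inner_sub_nonpos (K := Metric.closedBall 0 1)
    (fun x => mem_closedBall_zero_iff.2 (norm_projK_le_one x))
    (fun x _ hz => inner_sub_projK_nonpos x (mem_closedBall_zero_iff.1 hz)) x y

end UnitBallProjection

section SpectralNorm

open scoped Matrix.Norms.L2Operator

variable {m p : ℕ}

theorem matSpectralNorm_eq_l2_opNorm (A : Matrix (Fin m) (Fin p) ℝ) : matSpectralNorm A = ‖A‖ :=
  rfl

theorem matSpectralNorm_transpose (A : Matrix (Fin m) (Fin p) ℝ) :
    matSpectralNorm A.transpose = matSpectralNorm A := by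
  rw [matSpectralNorm_eq_l2_opNorm, matSpectralNorm_eq_l2_opNorm,
    ← Matrix.conjTranspose_eq_transpose_of_trivial, Matrix.l2_opNorm_conjTranspose]

theorem norm_toEuclideanLin_le (A : Matrix (Fin m) (Fin p) ℝ) (x : EuclideanSpace ℝ (Fin p)) :
    ‖Matrix.toEuclideanLin A x‖ ≤ matSpectralNorm A * ‖x‖ :=
  (LinearMap.toContinuousLinearMap (Matrix.toEuclideanLin A)).le_opNorm x

end SpectralNorm

theorem smoothedTV_gradient_lipschitz {m p : ℕ} (A : Matrix (Fin m) (Fin p) ℝ)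
    (μ : ℝ) (hμ : 0 < μ) (β₁ β₂ : EuclideanSpace ℝ (Fin p)) :
    ‖Matrix.toEuclideanLin A.transpose (projK (μ⁻¹ • Matrix.toEuclideanLin A β₁)) -
        Matrix.toEuclideanLin A.transpose (projK (μ⁻¹ • Matrix.toEuclideanLin A β₂))‖ ≤
      matSpectralNorm A ^ 2 / μ * ‖β₁ - β₂‖ := by
  set L := Matrix.toEuclideanLin A
  have hnorm : 0 ≤ matSpectralNorm A := norm_nonneg _
  calc _ = ‖Matrix.toEuclideanLin A.transpose (projK (μ⁻¹ • L β₁) - projK (μ⁻¹ • L β₂))‖ := by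
        rw [map_sub]
    _ ≤ matSpectralNorm A * ‖projK (μ⁻¹ • L β₁) - projK (μ⁻¹ • L β₂)‖ := by
        simpa only [matSpectralNorm_transpose] using norm_toEuclideanLin_le A.transpose _
    _ ≤ matSpectralNorm A * (μ⁻¹ * ‖L (β₁ - β₂)‖) := by
        gcongr
        simpa only [← smul_sub, ← map_sub, norm_smul, norm_inv, Real.norm_of_nonneg hμ.le]
          using norm_projK_sub_projK_le (μ⁻¹ • L β₁) (μ⁻¹ • L β₂)
    _ ≤ matSpectralNorm A * (μ⁻¹ * (matSpectralNorm A * ‖β₁ - β₂‖)) := by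
        gcongr
        exact norm_toEuclideanLin_le A _
    _ = matSpectralNorm A ^ 2 / μ * ‖β₁ - β₂‖ := by ring
end

section
/- Let g be convex differentiable with L(∇g)-Lipschitz gradient, s convex positively homogeneous of degree 1 with smoothing s_μ satisfying s_μ ≤ s ≤ s_μ + μM and L(∇s_μ) = ‖A‖₂²/μ, and γ > 0. For fixed ε > 0, the choice μ_opt(ε) = (−γM‖A‖₂² + sqrt((γM‖A‖₂²)² + M L(∇g) ‖A‖₂² ε)) / (M L(∇g)) is the unique positive minimizer over μ > 0 of the function μ ↦ (L(∇g) + γ‖A‖₂²/μ) / (ε − μγM), defined on the interval 0 < μ < ε/(γM). -/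
/-! Write `c = γ‖A‖₂²` and `b = γM`. Clearing denominators, the bound is `(Lμ + c) / (μ(ε - bμ))`,
and `μ_opt` is the positive root of the stationarity equation `Lbμ² + 2cbμ = cε`. For such a root
the difference of the bounds at `μ` and `μ_opt` is `(Lμ_opt + c) b (μ - μ_opt)²` divided by a
product of positive factors, so `μ_opt` is the strict global minimiser on `(0, ε/b)`. -/

noncomputable def smoothingComplexity (L c b ε μ : ℝ) : ℝ := (L + c / μ) / (ε - μ * b)

lemma quadratic_pos_root {a β C x : ℝ} (ha : 0 < a) (hC : 0 < C)
    (hx : x = (-β + √(β ^ 2 + a * C)) / a) : 0 < x ∧ a * x ^ 2 + 2 * β * x = C := by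
  have hsq : √(β ^ 2 + a * C) ^ 2 = β ^ 2 + a * C := Real.sq_sqrt (by positivity)
  have hβ : β < √(β ^ 2 + a * C) := Real.lt_sqrt_of_sq_lt (by nlinarith)
  subst hx
  refine ⟨div_pos (by linarith) ha, ?_⟩
  field_simp
  linear_combination hsq

section Minimiser

variable {L c b ε μ μ₀ : ℝ}

lemma lt_div_of_stationary (hL : 0 ≤ L) (hc : 0 < c) (hb : 0 < b) (hμ₀ : 0 < μ₀)
    (hstat : L * b * μ₀ ^ 2 + 2 * c * b * μ₀ = c * ε) : μ₀ < ε / b := by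
  rw [lt_div_iff₀ hb]
  nlinarith [mul_pos (mul_pos hc hb) hμ₀, mul_nonneg (mul_nonneg hL hb.le) (sq_nonneg μ₀)]

lemma smoothingComplexity_sub_of_stationary (hμ : μ ≠ 0) (hμε : ε - μ * b ≠ 0)
    (hμ₀ : μ₀ ≠ 0) (hμ₀ε : ε - μ₀ * b ≠ 0) (hstat : L * b * μ₀ ^ 2 + 2 * c * b * μ₀ = c * ε) :
    smoothingComplexity L c b ε μ - smoothingComplexity L c b ε μ₀ =
      (L * μ₀ + c) * b * (μ - μ₀) ^ 2 / (μ * (ε - μ * b) * (μ₀ * (ε - μ₀ * b))) := by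
  unfold smoothingComplexity
  rw [div_sub_div _ _ hμε hμ₀ε, div_eq_div_iff (mul_ne_zero hμε hμ₀ε) (by positivity)]
  field_simp
  linear_combination (μ - μ₀) * hstat

lemma mul_sub_mul_pos_of_lt_div (hb : 0 < b) (hμ : 0 < μ) (hμε : μ < ε / b) :
    0 < μ * (ε - μ * b) :=
  mul_pos hμ (sub_pos.2 ((lt_div_iff₀ hb).1 hμε))

lemma smoothingComplexity_le_of_stationary (hL : 0 ≤ L) (hc : 0 < c) (hb : 0 < b)
    (hμ₀ : 0 < μ₀) (hstat : L * b * μ₀ ^ 2 + 2 * c * b * μ₀ = c * ε) (hμ : 0 < μ)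
    (hμε : μ < ε / b) : smoothingComplexity L c b ε μ₀ ≤ smoothingComplexity L c b ε μ := by
  have hq := mul_sub_mul_pos_of_lt_div hb hμ hμε
  have hq₀ := mul_sub_mul_pos_of_lt_div hb hμ₀ (lt_div_of_stationary hL hc hb hμ₀ hstat)
  rw [← sub_nonneg, smoothingComplexity_sub_of_stationary hμ.ne' (right_ne_zero_of_mul hq.ne')
    hμ₀.ne' (right_ne_zero_of_mul hq₀.ne') hstat]
  positivity

lemma eq_of_smoothingComplexity_eq_of_stationary (hL : 0 ≤ L) (hc : 0 < c) (hb : 0 < b)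
    (hμ₀ : 0 < μ₀) (hstat : L * b * μ₀ ^ 2 + 2 * c * b * μ₀ = c * ε) (hμ : 0 < μ)
    (hμε : μ < ε / b) (heq : smoothingComplexity L c b ε μ = smoothingComplexity L c b ε μ₀) :
    μ = μ₀ := by
  have hq := mul_sub_mul_pos_of_lt_div hb hμ hμε
  have hq₀ := mul_sub_mul_pos_of_lt_div hb hμ₀ (lt_div_of_stationary hL hc hb hμ₀ hstat)
  rw [← sub_eq_zero, smoothingComplexity_sub_of_stationary hμ.ne' (right_ne_zero_of_mul hq.ne')
    hμ₀.ne' (right_ne_zero_of_mul hq₀.ne') hstat] at heq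
  have hcoef : 0 < (L * μ₀ + c) * b := by positivity
  simpa [hcoef.ne', hq.ne', hq₀.ne', sub_eq_zero] using heq

end Minimiser

theorem optimal_smoothing_parameter (Lg nA γ M ε : ℝ)
    (hLg : 0 < Lg) (hnA : 0 < nA) (hγ : 0 < γ) (hM : 0 < M) (hε : 0 < ε)
    (h : ℝ → ℝ) (hh : h = fun μ => (Lg + γ * nA ^ 2 / μ) / (ε - μ * γ * M))
    (μopt : ℝ)
    (hμopt : μopt = (-(γ * M * nA ^ 2) +
        Real.sqrt ((γ * M * nA ^ 2) ^ 2 + M * Lg * nA ^ 2 * ε)) / (M * Lg)) :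
    0 < μopt ∧ μopt < ε / (γ * M) ∧
      (∀ μ, 0 < μ → μ < ε / (γ * M) → h μopt ≤ h μ) ∧
      ∀ μ, 0 < μ → μ < ε / (γ * M) → h μ = h μopt → μ = μopt := by
  rw [show M * Lg * nA ^ 2 * ε = M * Lg * (nA ^ 2 * ε) by ring] at hμopt
  obtain ⟨hpos, hroot⟩ := quadratic_pos_root (by positivity) (by positivity) hμopt
  have hstat : Lg * (γ * M) * μopt ^ 2 + 2 * (γ * nA ^ 2) * (γ * M) * μopt = γ * nA ^ 2 * ε := by
    linear_combination γ * hroot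
  have hh' : h = smoothingComplexity Lg (γ * nA ^ 2) (γ * M) ε := by
    funext μ
    simp only [hh, smoothingComplexity, mul_assoc]
  have hc : 0 < γ * nA ^ 2 := by positivity
  have hb : 0 < γ * M := by positivity
  subst hh'
  exact ⟨hpos, lt_div_of_stationary hLg.le hc hb hpos hstat,
    fun μ hμ hμε => smoothingComplexity_le_of_stationary hLg.le hc hb hpos hstat hμ hμε,
    fun μ hμ hμε => eq_of_smoothingComplexity_eq_of_stationary hLg.le hc hb hpos hstat hμ hμε⟩
end
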